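/- arXiv:1304.2965 — 3 statements merged into one kernel-verified Lean document; each statement's English description precedes it below -/
import Mathlib

section
/- For each point (x₀,y₀) in the open unit disk and each unit vector (u₀,v₀), there is a unique anticlockwise-oriented circle through (x₀,y₀) with tangent (u₀,v₀) there that is internally tangent to the unit circle; its radius is ρ = (1 - (x₀² + y₀²))/(2(√(u₀² + v₀²) + y₀u₀ - x₀v₀)) and its centre is (x₀ - ρv₀, y₀ + ρu₀). In particular ρ > 0 and the distance of the centre from the origin equals 1 - ρ. -/
/-- The radius of the anticlockwise horocycle through `(x₀,y₀)` with tangent `(u₀,v₀)`. -/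
noncomputable def horoRadius (x0 y0 u0 v0 : ℝ) : ℝ :=
  (1 - (x0 ^ 2 + y0 ^ 2)) /
    (2 * (Real.sqrt (u0 ^ 2 + v0 ^ 2) + y0 * u0 - x0 * v0))

/-- Through each point of the open unit disk with each unit tangent vector there is a
unique anticlockwise-oriented circle internally tangent to the unit circle; its radius is
`ρ = (1 - (x₀²+y₀²))/(2(√(u₀²+v₀²) + y₀u₀ - x₀v₀))` and its centre `(x₀ - ρv₀, y₀ + ρu₀)`
is at distance `1 - ρ` from the origin. -/
theorem horocycle_exists_unique
    (x0 y0 u0 v0 : ℝ) (hdisk : x0 ^ 2 + y0 ^ 2 < 1) (hunit : u0 ^ 2 + v0 ^ 2 = 1) :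
    0 < horoRadius x0 y0 u0 v0 ∧
    Real.sqrt ((x0 - horoRadius x0 y0 u0 v0 * v0) ^ 2 +
        (y0 + horoRadius x0 y0 u0 v0 * u0) ^ 2) = 1 - horoRadius x0 y0 u0 v0 ∧
    ∀ ρ' : ℝ, 0 < ρ' →
      Real.sqrt ((x0 - ρ' * v0) ^ 2 + (y0 + ρ' * u0) ^ 2) + ρ' = 1 →
      ρ' = horoRadius x0 y0 u0 v0 := by
  have hs : Real.sqrt (u0 ^ 2 + v0 ^ 2) = 1 := by rw [hunit]; exact Real.sqrt_one
  set r := Real.sqrt (x0 ^ 2 + y0 ^ 2) with hrdef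
  have hr2 : r ^ 2 = x0 ^ 2 + y0 ^ 2 := Real.sq_sqrt (by positivity)
  have hrnn : 0 ≤ r := Real.sqrt_nonneg _
  have hrlt : r < 1 := by nlinarith
  have ha2 : (y0 * u0 - x0 * v0) ^ 2 ≤ r ^ 2 := by
    nlinarith [sq_nonneg (y0 * v0 + x0 * u0)]
  have har : -r ≤ y0 * u0 - x0 * v0 := by nlinarith
  have ha : -1 < y0 * u0 - x0 * v0 := by nlinarith
  set ρ := horoRadius x0 y0 u0 v0 with hρdef
  have hρ : ρ = (1 - (x0 ^ 2 + y0 ^ 2)) / (2 * (1 + y0 * u0 - x0 * v0)) := by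
    rw [hρdef, horoRadius, hs]
  have hdne : (2 * (1 + y0 * u0 - x0 * v0)) ≠ 0 := by nlinarith
  have hkey : 2 * ρ * (1 + y0 * u0 - x0 * v0) = 1 - (x0 ^ 2 + y0 ^ 2) := by
    rw [hρ, mul_div_assoc', div_mul_eq_mul_div, div_eq_iff hdne]; ring
  have hρpos : 0 < ρ := by
    rw [hρ]; exact div_pos (by nlinarith) (by nlinarith)
  have hρle : ρ ≤ 1 := by nlinarith [sq_nonneg (1 - r)]
  refine ⟨hρpos, ?_, ?_⟩
  · have hsq : (x0 - ρ * v0) ^ 2 + (y0 + ρ * u0) ^ 2 = (1 - ρ) ^ 2 := by linear_combination ρ ^ 2 * hunit + hkey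
    rw [hsq, Real.sqrt_sq (by linarith)]
  · intro ρ' hρ' heq
    have hnn : Real.sqrt ((x0 - ρ' * v0) ^ 2 + (y0 + ρ' * u0) ^ 2) = 1 - ρ' := by linarith
    have h1 : (x0 - ρ' * v0) ^ 2 + (y0 + ρ' * u0) ^ 2 = (1 - ρ') ^ 2 := by
      have h := Real.sq_sqrt (by positivity : (0:ℝ) ≤ (x0 - ρ' * v0) ^ 2 + (y0 + ρ' * u0) ^ 2)
      rw [hnn] at h; linarith [h]
    have h2 : 2 * ρ' * (1 + y0 * u0 - x0 * v0) = 1 - (x0 ^ 2 + y0 ^ 2) := by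
      linear_combination h1 - ρ' ^ 2 * hunit
    have h5 : ρ' * (2 * (1 + y0 * u0 - x0 * v0)) = ρ * (2 * (1 + y0 * u0 - x0 * v0)) := by
      linarith [hkey, h2]
    exact mul_right_cancel₀ hdne h5
end

section
/- Let φ, a, b be smooth functions on an open subset M of ℝ², with μ = e^{-φ}(∂a/∂y - ∂b/∂x), and define λ(x,y,u,v) = μ(x,y)√(u² + v²) + φ_y(x,y)u - φ_x(x,y)v. Then Γ(λ) = 0 (where Γ = u∂/∂x + v∂/∂y + λ(-v∂/∂u + u∂/∂v)) holds identically on the slit tangent bundle if and only if: (i) φ_{xy} = φ_x φ_y, (ii) φ_{xx} - φ_{yy} = φ_x² - φ_y², and (iii) μe^{-φ} is locally constant. -/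
/-- Partial derivative in the `x`-direction. -/
noncomputable def pd1 (g : ℝ × ℝ → ℝ) (p : ℝ × ℝ) : ℝ := fderiv ℝ g p (1, 0)

/-- Partial derivative in the `y`-direction. -/
noncomputable def pd2 (g : ℝ × ℝ → ℝ) (p : ℝ × ℝ) : ℝ := fderiv ℝ g p (0, 1)

/-- `μ = e^{-φ}(a_y - b_x)`. -/
noncomputable def muF (φ a b : ℝ × ℝ → ℝ) (p : ℝ × ℝ) : ℝ :=
  Real.exp (-φ p) * (pd2 a p - pd1 b p)

/-- `λ(x,y,u,v) = μ√(u²+v²) + φ_y u - φ_x v`. -/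
noncomputable def lamF (φ a b : ℝ × ℝ → ℝ) (q : ℝ × ℝ × ℝ × ℝ) : ℝ :=
  muF φ a b (q.1, q.2.1) * Real.sqrt (q.2.2.1 ^ 2 + q.2.2.2 ^ 2) +
    pd2 φ (q.1, q.2.1) * q.2.2.1 - pd1 φ (q.1, q.2.1) * q.2.2.2

section Aux

variable {M : Set (ℝ × ℝ)}

noncomputable def Pxy : (ℝ × ℝ × ℝ × ℝ) →L[ℝ] ℝ × ℝ :=
  (ContinuousLinearMap.fst ℝ ℝ (ℝ × ℝ × ℝ)).prod
    ((ContinuousLinearMap.fst ℝ ℝ (ℝ × ℝ)).comp (ContinuousLinearMap.snd ℝ ℝ (ℝ × ℝ × ℝ)))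

noncomputable def P3 : (ℝ × ℝ × ℝ × ℝ) →L[ℝ] ℝ :=
  (ContinuousLinearMap.fst ℝ ℝ ℝ).comp
    ((ContinuousLinearMap.snd ℝ ℝ (ℝ × ℝ)).comp (ContinuousLinearMap.snd ℝ ℝ (ℝ × ℝ × ℝ)))

noncomputable def P4 : (ℝ × ℝ × ℝ × ℝ) →L[ℝ] ℝ :=
  (ContinuousLinearMap.snd ℝ ℝ ℝ).comp
    ((ContinuousLinearMap.snd ℝ ℝ (ℝ × ℝ)).comp (ContinuousLinearMap.snd ℝ ℝ (ℝ × ℝ × ℝ)))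

@[simp] lemma Pxy_apply (q : ℝ × ℝ × ℝ × ℝ) : Pxy q = (q.1, q.2.1) := rfl
@[simp] lemma P3_apply (q : ℝ × ℝ × ℝ × ℝ) : P3 q = q.2.2.1 := rfl
@[simp] lemma P4_apply (q : ℝ × ℝ × ℝ × ℝ) : P4 q = q.2.2.2 := rfl

lemma clm_eval (T : ℝ × ℝ →L[ℝ] ℝ) (w : ℝ × ℝ) :
    T w = w.1 * T (1, 0) + w.2 * T (0, 1) := by
  have h : w = w.1 • ((1:ℝ), (0:ℝ)) + w.2 • ((0:ℝ), (1:ℝ)) := by ext <;> simp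
  calc T w = T (w.1 • ((1:ℝ), (0:ℝ)) + w.2 • ((0:ℝ), (1:ℝ))) := by rw [← h]
  _ = w.1 * T (1, 0) + w.2 * T (0, 1) := by
      rw [map_add, map_smul, map_smul]; simp [smul_eq_mul]

lemma fderiv_pair (f : ℝ × ℝ → ℝ) (p : ℝ × ℝ) (c d : ℝ) :
    fderiv ℝ f p (c, d) = c * pd1 f p + d * pd2 f p :=
  clm_eval (fderiv ℝ f p) (c, d)

lemma diffAt (hM : IsOpen M) {g : ℝ × ℝ → ℝ} (hg : ContDiffOn ℝ (⊤ : ℕ∞) g M)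
    {p : ℝ × ℝ} (hp : p ∈ M) : DifferentiableAt ℝ g p :=
  (hg.contDiffAt (hM.mem_nhds hp)).differentiableAt (by simp)

lemma contDiffOn_pd1 (hM : IsOpen M) {g : ℝ × ℝ → ℝ} (hg : ContDiffOn ℝ (⊤ : ℕ∞) g M) :
    ContDiffOn ℝ (⊤ : ℕ∞) (pd1 g) M :=
  (hg.fderiv_of_isOpen hM (by simp)).clm_apply contDiffOn_const

lemma contDiffOn_pd2 (hM : IsOpen M) {g : ℝ × ℝ → ℝ} (hg : ContDiffOn ℝ (⊤ : ℕ∞) g M) :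
    ContDiffOn ℝ (⊤ : ℕ∞) (pd2 g) M :=
  (hg.fderiv_of_isOpen hM (by simp)).clm_apply contDiffOn_const

lemma contDiffOn_muF (hM : IsOpen M) {φ a b : ℝ × ℝ → ℝ} (hφ : ContDiffOn ℝ (⊤ : ℕ∞) φ M)
    (ha : ContDiffOn ℝ (⊤ : ℕ∞) a M) (hb : ContDiffOn ℝ (⊤ : ℕ∞) b M) :
    ContDiffOn ℝ (⊤ : ℕ∞) (muF φ a b) M :=
  ((Real.contDiff_exp.comp_contDiffOn hφ.neg)).mul
    ((contDiffOn_pd2 hM ha).sub (contDiffOn_pd1 hM hb))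

lemma schwarz (hM : IsOpen M) {φ : ℝ × ℝ → ℝ} (hφ : ContDiffOn ℝ (⊤ : ℕ∞) φ M)
    {p : ℝ × ℝ} (hp : p ∈ M) : pd1 (pd2 φ) p = pd2 (pd1 φ) p := by
  have hf' : ContDiffOn ℝ (⊤ : ℕ∞) (fderiv ℝ φ) M := hφ.fderiv_of_isOpen hM (by simp)
  have hd : DifferentiableAt ℝ (fderiv ℝ φ) p :=
    (hf'.contDiffAt (hM.mem_nhds hp)).differentiableAt (by simp)
  have hev : ∀ᶠ y in nhds p, HasFDerivAt φ (fderiv ℝ φ y) y := by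
    filter_upwards [hM.mem_nhds hp] with y hy using (diffAt hM hφ hy).hasFDerivAt
  have hsymm := second_derivative_symmetric_of_eventually hev hd.hasFDerivAt
    ((1:ℝ), (0:ℝ)) ((0:ℝ), (1:ℝ))
  have h1 : pd1 (pd2 φ) p = (fderiv ℝ (fderiv ℝ φ) p (1, 0)) (0, 1) := by
    have h : pd2 φ = fun q => (fderiv ℝ φ q) ((0:ℝ), (1:ℝ)) := rfl
    rw [pd1, h, fderiv_clm_apply hd (differentiableAt_const _)]
    simp
  have h2 : pd2 (pd1 φ) p = (fderiv ℝ (fderiv ℝ φ) p (0, 1)) (1, 0) := by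
    have h : pd1 φ = fun q => (fderiv ℝ φ q) ((1:ℝ), (0:ℝ)) := rfl
    rw [pd2, h, fderiv_clm_apply hd (differentiableAt_const _)]
    simp
  rw [h1, h2, hsymm]

lemma lamF_fderiv_apply (hM : IsOpen M) {φ a b : ℝ × ℝ → ℝ}
    (hφ : ContDiffOn ℝ (⊤ : ℕ∞) φ M) (ha : ContDiffOn ℝ (⊤ : ℕ∞) a M) (hb : ContDiffOn ℝ (⊤ : ℕ∞) b M)
    {p : ℝ × ℝ} (hp : p ∈ M) {u v : ℝ} (huv : u ^ 2 + v ^ 2 ≠ 0) (w : ℝ × ℝ × ℝ × ℝ) :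
    fderiv ℝ (lamF φ a b) (p.1, p.2, u, v) w =
      (w.1 * pd1 (muF φ a b) p + w.2.1 * pd2 (muF φ a b) p) * Real.sqrt (u ^ 2 + v ^ 2)
      + muF φ a b p * ((u * w.2.2.1 + v * w.2.2.2) / Real.sqrt (u ^ 2 + v ^ 2))
      + ((w.1 * pd1 (pd2 φ) p + w.2.1 * pd2 (pd2 φ) p) * u + pd2 φ p * w.2.2.1)
      - ((w.1 * pd1 (pd1 φ) p + w.2.1 * pd2 (pd1 φ) p) * v + pd1 φ p * w.2.2.2) := by
  have hmu := diffAt hM (contDiffOn_muF hM hφ ha hb) hp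
  have hp2 := diffAt hM (contDiffOn_pd2 hM hφ) hp
  have hp1 := diffAt hM (contDiffOn_pd1 hM hφ) hp
  have hxy : HasFDerivAt (fun q : ℝ × ℝ × ℝ × ℝ => ((q.1, q.2.1) : ℝ × ℝ)) Pxy
      (p.1, p.2, u, v) := Pxy.hasFDerivAt
  have h1 : HasFDerivAt (fun q : ℝ × ℝ × ℝ × ℝ => muF φ a b (q.1, q.2.1))
      ((fderiv ℝ (muF φ a b) p).comp Pxy) (p.1, p.2, u, v) :=
    by have := hmu.hasFDerivAt.comp (p.1, p.2, u, v) hxy; exact this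
  have h2 : HasFDerivAt (fun q : ℝ × ℝ × ℝ × ℝ => pd2 φ (q.1, q.2.1))
      ((fderiv ℝ (pd2 φ) p).comp Pxy) (p.1, p.2, u, v) :=
    by have := hp2.hasFDerivAt.comp (p.1, p.2, u, v) hxy; exact this
  have h3 : HasFDerivAt (fun q : ℝ × ℝ × ℝ × ℝ => pd1 φ (q.1, q.2.1))
      ((fderiv ℝ (pd1 φ) p).comp Pxy) (p.1, p.2, u, v) :=
    by have := hp1.hasFDerivAt.comp (p.1, p.2, u, v) hxy; exact this
  have hq3 : HasFDerivAt (fun q : ℝ × ℝ × ℝ × ℝ => q.2.2.1) P3 (p.1, p.2, u, v) :=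
    P3.hasFDerivAt
  have hq4 : HasFDerivAt (fun q : ℝ × ℝ × ℝ × ℝ => q.2.2.2) P4 (p.1, p.2, u, v) :=
    P4.hasFDerivAt
  have hn : HasFDerivAt (fun q : ℝ × ℝ × ℝ × ℝ => q.2.2.1 ^ 2 + q.2.2.2 ^ 2)
      ((u • P3 + u • P3) + (v • P4 + v • P4)) (p.1, p.2, u, v) := by
    have h34 := (hq3.mul hq3).add (hq4.mul hq4)
    exact h34.congr_of_eventuallyEq (Filter.Eventually.of_forall fun q => by simp only [Pi.add_apply, Pi.mul_apply]; ring)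
  have hs : HasFDerivAt (fun q : ℝ × ℝ × ℝ × ℝ => Real.sqrt (q.2.2.1 ^ 2 + q.2.2.2 ^ 2))
      ((1 / (2 * Real.sqrt (u ^ 2 + v ^ 2))) • ((u • P3 + u • P3) + (v • P4 + v • P4)))
      (p.1, p.2, u, v) :=
    (Real.hasDerivAt_sqrt huv).comp_hasFDerivAt ((p.1, p.2, u, v) : ℝ × ℝ × ℝ × ℝ) hn
  have H : HasFDerivAt (lamF φ a b) _ (p.1, p.2, u, v) :=
    ((h1.mul hs).add (h2.mul hq3)).sub (h3.mul hq4)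
  rw [H.fderiv]
  have hsqrt : Real.sqrt (u ^ 2 + v ^ 2) ≠ 0 := by
    rw [Real.sqrt_ne_zero']
    rcases (lt_or_eq_of_le (by positivity : (0:ℝ) ≤ u ^ 2 + v ^ 2)) with h | h
    · exact h
    · exact absurd h.symm huv
  simp only [ContinuousLinearMap.add_apply, ContinuousLinearMap.coe_sub',
    Pi.sub_apply, ContinuousLinearMap.coe_smul', Pi.smul_apply,
    ContinuousLinearMap.comp_apply, ContinuousLinearMap.smul_apply,
    smul_eq_mul, Pxy_apply, P3_apply, P4_apply]
  rw [fderiv_pair, fderiv_pair, fderiv_pair]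
  field_simp
  ring

lemma muexp_fderiv_apply (hM : IsOpen M) {φ a b : ℝ × ℝ → ℝ}
    (hφ : ContDiffOn ℝ (⊤ : ℕ∞) φ M) (ha : ContDiffOn ℝ (⊤ : ℕ∞) a M) (hb : ContDiffOn ℝ (⊤ : ℕ∞) b M)
    {p : ℝ × ℝ} (hp : p ∈ M) (w : ℝ × ℝ) :
    fderiv ℝ (fun q => muF φ a b q * Real.exp (-φ q)) p w =
      Real.exp (-φ p) *
        (fderiv ℝ (muF φ a b) p w - muF φ a b p * fderiv ℝ φ p w) := by
  have hmu := diffAt hM (contDiffOn_muF hM hφ ha hb) hp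
  have hphi := diffAt hM hφ hp
  have hE : HasFDerivAt (fun q => Real.exp (-φ q))
      (Real.exp (-φ p) • (-fderiv ℝ φ p)) p :=
    by have := (Real.hasDerivAt_exp (-φ p)).comp_hasFDerivAt p hphi.hasFDerivAt.neg; exact this
  have H := hmu.hasFDerivAt.mul hE
  rw [show (fun q => muF φ a b q * Real.exp (-φ q)) = muF φ a b * fun q => Real.exp (-φ q) from rfl, H.fderiv]
  simp only [ContinuousLinearMap.add_apply, ContinuousLinearMap.coe_smul',
    Pi.smul_apply, ContinuousLinearMap.neg_apply, smul_eq_mul]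
  ring

end Aux

/-- `Γ(λ) = 0` on the slit tangent bundle over `M` iff `φ_{xy} = φ_xφ_y`,
`φ_{xx} - φ_{yy} = φ_x² - φ_y²`, and `μe^{-φ}` is locally constant on `M`. -/
theorem spray_lambda_zero_iff_conditions
    (M : Set (ℝ × ℝ)) (hM : IsOpen M) (φ a b : ℝ × ℝ → ℝ)
    (hφ : ContDiffOn ℝ (⊤ : ℕ∞) φ M) (ha : ContDiffOn ℝ (⊤ : ℕ∞) a M) (hb : ContDiffOn ℝ (⊤ : ℕ∞) b M) :
    (∀ p ∈ M, ∀ u v : ℝ, (u, v) ≠ (0, 0) →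
      fderiv ℝ (lamF φ a b) (p.1, p.2, u, v)
        (u, v, -(lamF φ a b (p.1, p.2, u, v)) * v, lamF φ a b (p.1, p.2, u, v) * u)
        = 0) ↔
    ((∀ p ∈ M, pd2 (pd1 φ) p = pd1 φ p * pd2 φ p) ∧
     (∀ p ∈ M, pd1 (pd1 φ) p - pd2 (pd2 φ) p = (pd1 φ p) ^ 2 - (pd2 φ p) ^ 2) ∧
     (∀ p ∈ M, fderiv ℝ (fun q => muF φ a b q * Real.exp (-φ q)) p = 0)) := by
  constructor
  · intro H
    have key : ∀ p ∈ M,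
        pd1 (muF φ a b) p = muF φ a b p * pd1 φ p ∧
        pd2 (muF φ a b) p = muF φ a b p * pd2 φ p ∧
        pd2 (pd1 φ) p = pd1 φ p * pd2 φ p ∧
        pd1 (pd1 φ) p - pd2 (pd2 φ) p = (pd1 φ p) ^ 2 - (pd2 φ p) ^ 2 := by
      intro p hp
      have hlam : ∀ u v : ℝ, lamF φ a b (p.1, p.2, u, v) =
          muF φ a b p * Real.sqrt (u ^ 2 + v ^ 2) + pd2 φ p * u - pd1 φ p * v := by
        intro u v; simp [lamF]
      have he1 := H p hp 1 0 (by simp)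
      have he2 := H p hp (-1) 0 (by simp)
      have he3 := H p hp 0 1 (by simp)
      have he4 := H p hp 0 (-1) (by simp)
      have he5 := H p hp 1 1 (by simp)
      rw [lamF_fderiv_apply hM hφ ha hb hp (by norm_num)] at he1 he2 he3 he4 he5
      simp only [hlam] at he1 he2 he3 he4 he5
      norm_num at he1 he2 he3 he4 he5
      have hgx : pd1 (muF φ a b) p = muF φ a b p * pd1 φ p := by
        linear_combination (he1 - he2) / 2
      have hhx : pd1 (pd2 φ) p = pd2 φ p * pd1 φ p := by
        linear_combination (he1 + he2) / 2
      have hgy : pd2 (muF φ a b) p = muF φ a b p * pd2 φ p := by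
        linear_combination (he3 - he4) / 2
      have hky : pd2 (pd1 φ) p = pd1 φ p * pd2 φ p := by
        linear_combination -(he3 + he4) / 2
      refine ⟨hgx, hgy, hky, ?_⟩
      linear_combination -he5 + Real.sqrt 2 * hgx + Real.sqrt 2 * hgy + hhx - hky
    refine ⟨fun p hp => (key p hp).2.2.1, fun p hp => (key p hp).2.2.2, fun p hp => ?_⟩
    obtain ⟨hgx, hgy, -, -⟩ := key p hp
    refine ContinuousLinearMap.ext fun w => ?_
    rw [ContinuousLinearMap.zero_apply, clm_eval, muexp_fderiv_apply hM hφ ha hb hp,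
      muexp_fderiv_apply hM hφ ha hb hp]
    have e1 : fderiv ℝ (muF φ a b) p ((1:ℝ), (0:ℝ)) = pd1 (muF φ a b) p := rfl
    have e2 : fderiv ℝ (muF φ a b) p ((0:ℝ), (1:ℝ)) = pd2 (muF φ a b) p := rfl
    have e3 : fderiv ℝ φ p ((1:ℝ), (0:ℝ)) = pd1 φ p := rfl
    have e4 : fderiv ℝ φ p ((0:ℝ), (1:ℝ)) = pd2 φ p := rfl
    rw [e1, e2, e3, e4, hgx, hgy]
    ring
  · rintro ⟨h1, h2, h3⟩ p hp u v huv0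
    have huv : u ^ 2 + v ^ 2 ≠ 0 := by
      have : u ≠ 0 ∨ v ≠ 0 := by
        by_contra h
        push_neg at h
        exact huv0 (by simp [h.1, h.2])
      rcases this with h | h
      · positivity
      · positivity
    have hlam : lamF φ a b (p.1, p.2, u, v) =
        muF φ a b p * Real.sqrt (u ^ 2 + v ^ 2) + pd2 φ p * u - pd1 φ p * v := by
      simp [lamF]
    have h10 : fderiv ℝ (fun q => muF φ a b q * Real.exp (-φ q)) p ((1:ℝ), (0:ℝ)) = 0 := by
      rw [h3 p hp]; rfl
    have h01 : fderiv ℝ (fun q => muF φ a b q * Real.exp (-φ q)) p ((0:ℝ), (1:ℝ)) = 0 := by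
      rw [h3 p hp]; rfl
    rw [muexp_fderiv_apply hM hφ ha hb hp] at h10 h01
    have hgx : pd1 (muF φ a b) p = muF φ a b p * pd1 φ p := by
      rcases mul_eq_zero.mp h10 with h | h
      · exact absurd h (Real.exp_ne_zero _)
      · have := sub_eq_zero.mp h
        simpa [pd1] using this
    have hgy : pd2 (muF φ a b) p = muF φ a b p * pd2 φ p := by
      rcases mul_eq_zero.mp h01 with h | h
      · exact absurd h (Real.exp_ne_zero _)
      · have := sub_eq_zero.mp h
        simpa [pd2] using this
    have hhx : pd1 (pd2 φ) p = pd1 φ p * pd2 φ p := by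
      rw [schwarz hM hφ hp]; exact h1 p hp
    have hkx : pd1 (pd1 φ) p = pd2 (pd2 φ) p + (pd1 φ p) ^ 2 - (pd2 φ p) ^ 2 := by
      linarith [h2 p hp]
    rw [lamF_fderiv_apply hM hφ ha hb hp huv, hlam]
    dsimp only
    rw [hgx, hgy, hhx, hkx, h1 p hp]
    ring
end

section
/- Let f(x,y) = l(x² + y²) + mx + ny + p with m, n, p not all zero, and let α, β, γ, δ be constants satisfying mα + nβ - 2lγ = 0, -nα + mβ + 2lδ = 0, and 2pβ - nγ + mδ = 1. Then a(x,y) = (αx + βy + γ)/f(x,y) and b(x,y) = (-βx + αy + δ)/f(x,y) satisfy f²(∂a/∂y - ∂b/∂x) = 1 wherever f ≠ 0. -/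
/-- With `f = l(x²+y²) + mx + ny + p` (with `m, n, p` not all zero) and constants
`α, β, γ, δ` satisfying `mα + nβ - 2lγ = 0`, `-nα + mβ + 2lδ = 0`, `2pβ - nγ + mδ = 1`,
the pair `a = (αx + βy + γ)/f`, `b = (-βx + αy + δ)/f` satisfies
`f²(a_y - b_x) = 1` wherever `f ≠ 0`. -/
theorem explicit_randers_one_form
    (l m n p α β γ δ : ℝ) (hmnp : ¬(m = 0 ∧ n = 0 ∧ p = 0))
    (h1 : m * α + n * β - 2 * l * γ = 0)
    (h2 : -n * α + m * β + 2 * l * δ = 0)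
    (h3 : 2 * p * β - n * γ + m * δ = 1)
    (f a b : ℝ × ℝ → ℝ)
    (hf : f = fun q => l * (q.1 ^ 2 + q.2 ^ 2) + m * q.1 + n * q.2 + p)
    (ha : a = fun q => (α * q.1 + β * q.2 + γ) / f q)
    (hb : b = fun q => (-β * q.1 + α * q.2 + δ) / f q) :
    ∀ q : ℝ × ℝ, f q ≠ 0 →
      (f q) ^ 2 * (fderiv ℝ a q (0, 1) - fderiv ℝ b q (1, 0)) = 1 := by
  subst hf ha hb
  intro q hq
  have hx : HasFDerivAt (fun q : ℝ × ℝ => q.1) (ContinuousLinearMap.fst ℝ ℝ ℝ) q :=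
    hasFDerivAt_fst
  have hy : HasFDerivAt (fun q : ℝ × ℝ => q.2) (ContinuousLinearMap.snd ℝ ℝ ℝ) q :=
    hasFDerivAt_snd
  have hF : HasFDerivAt (fun q : ℝ × ℝ => l * (q.1 ^ 2 + q.2 ^ 2) + m * q.1 + n * q.2 + p)
      ((l • ((q.1 • ContinuousLinearMap.fst ℝ ℝ ℝ + q.1 • ContinuousLinearMap.fst ℝ ℝ ℝ) +
        (q.2 • ContinuousLinearMap.snd ℝ ℝ ℝ + q.2 • ContinuousLinearMap.snd ℝ ℝ ℝ)) +
        m • ContinuousLinearMap.fst ℝ ℝ ℝ) + n • ContinuousLinearMap.snd ℝ ℝ ℝ) q := by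
    have he : (fun q : ℝ × ℝ => l * (q.1 ^ 2 + q.2 ^ 2) + m * q.1 + n * q.2 + p) =
        fun q : ℝ × ℝ => l * (q.1 * q.1 + q.2 * q.2) + m * q.1 + n * q.2 + p := by
      funext q; ring
    rw [he]
    exact (((((hx.mul hx).add (hy.mul hy)).const_mul l).add (hx.const_mul m)).add
      (hy.const_mul n)).add_const p
  have hNa : HasFDerivAt (fun q : ℝ × ℝ => α * q.1 + β * q.2 + γ)
      (α • ContinuousLinearMap.fst ℝ ℝ ℝ + β • ContinuousLinearMap.snd ℝ ℝ ℝ) q :=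
    ((hx.const_mul α).add (hy.const_mul β)).add_const γ
  have hNb : HasFDerivAt (fun q : ℝ × ℝ => -β * q.1 + α * q.2 + δ)
      ((-β) • ContinuousLinearMap.fst ℝ ℝ ℝ + α • ContinuousLinearMap.snd ℝ ℝ ℝ) q :=
    ((hx.const_mul (-β)).add (hy.const_mul α)).add_const δ
  have hInv : HasFDerivAt (fun q : ℝ × ℝ => ((l * (q.1 ^ 2 + q.2 ^ 2) + m * q.1 + n * q.2 + p))⁻¹)
      ((ContinuousLinearMap.smulRight (1 : ℝ →L[ℝ] ℝ)
        (-((l * (q.1 ^ 2 + q.2 ^ 2) + m * q.1 + n * q.2 + p) ^ 2)⁻¹)).comp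
        ((l • ((q.1 • ContinuousLinearMap.fst ℝ ℝ ℝ + q.1 • ContinuousLinearMap.fst ℝ ℝ ℝ) +
        (q.2 • ContinuousLinearMap.snd ℝ ℝ ℝ + q.2 • ContinuousLinearMap.snd ℝ ℝ ℝ)) +
        m • ContinuousLinearMap.fst ℝ ℝ ℝ) + n • ContinuousLinearMap.snd ℝ ℝ ℝ)) q :=
    (hasFDerivAt_inv hq).comp q hF
  have hA' := (hNa.mul hInv)
  have hB' := (hNb.mul hInv)
  simp only [Pi.mul_def] at hA' hB'
  have hAeq : (fun q : ℝ × ℝ => (α * q.1 + β * q.2 + γ) /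
      (l * (q.1 ^ 2 + q.2 ^ 2) + m * q.1 + n * q.2 + p)) =
      fun q : ℝ × ℝ => (α * q.1 + β * q.2 + γ) *
      ((l * (q.1 ^ 2 + q.2 ^ 2) + m * q.1 + n * q.2 + p))⁻¹ := by
    funext q; rw [div_eq_mul_inv]
  have hBeq : (fun q : ℝ × ℝ => (-β * q.1 + α * q.2 + δ) /
      (l * (q.1 ^ 2 + q.2 ^ 2) + m * q.1 + n * q.2 + p)) =
      fun q : ℝ × ℝ => (-β * q.1 + α * q.2 + δ) *
      ((l * (q.1 ^ 2 + q.2 ^ 2) + m * q.1 + n * q.2 + p))⁻¹ := by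
    funext q; rw [div_eq_mul_inv]
  simp only [hAeq, hBeq]
  rw [hA'.fderiv, hB'.fderiv]
  simp only [ContinuousLinearMap.smul_apply, ContinuousLinearMap.sub_apply,
    ContinuousLinearMap.add_apply, ContinuousLinearMap.coe_fst', ContinuousLinearMap.coe_snd',
    ContinuousLinearMap.coe_smul', Pi.smul_apply, smul_eq_mul,
    ContinuousLinearMap.comp_apply, ContinuousLinearMap.smulRight_apply,
    ContinuousLinearMap.one_apply]
  set F := l * (q.1 ^ 2 + q.2 ^ 2) + m * q.1 + n * q.2 + p with hFdef
  have hq' : F ≠ 0 := hq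
  have key : 2 * β * F - (α * q.1 + β * q.2 + γ) * (2 * l * q.2 + n) +
      (-β * q.1 + α * q.2 + δ) * (2 * l * q.1 + m) = 1 := by
    rw [hFdef]; linear_combination q.1 * h2 + q.2 * h1 + h3
  field_simp
  linear_combination key
end
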